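/- Let K be a real quadratic field, 𝔞 a nonzero ideal of O_K with absolute norm N𝔞, and Q_A the quadratic form on V_A = K × K given by Q_A(z₁, z₂) = N(z₁)/N𝔞 − N(z₂)/N𝔞. Then the center of the even subalgebra C⁰ of the Clifford algebra of Q_A is isomorphic as a ℚ-algebra to ℚ × ℚ (the split two-dimensional étale ℚ-algebra); equivalently, the center is two-dimensional over ℚ and contains a nontrivial idempotent. -/

import Mathlib

/-!
Write `K = ℚ(α)` with `α² = d` and `n = N𝔞`. In the coordinates `zᵢ = pᵢ + qᵢα` the norm form
gives `Q_A = (p₁² - p₂²)/n - d (q₁² - q₂²)/n`, a sum of two rescaled hyperbolic planes, so `Q_A` is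
isometric to `x² - y² + z² - w²`, which is Mathlib's `EquivEven.Q'` of `x² - y² + z²`. Hence
`C⁰(Q_A) ≅ C(x² - y² + z²)`, and Pauli-type matrices realise the latter as `M₂(ℚ) × M₂(ℚ)`:
the map is onto because the volume element goes to `(1, -1)`, and injective because both sides
have dimension `8`. The centre of `M₂(ℚ) × M₂(ℚ)` is `ℚ × ℚ`.
-/

open CliffordAlgebra Module

def AlgEquiv.centerCongr {R A B : Type*} [CommSemiring R] [Semiring A] [Semiring B]
    [Algebra R A] [Algebra R B] (e : A ≃ₐ[R] B) :
    Subalgebra.center R A ≃ₐ[R] Subalgebra.center R B :=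
  { Subsemiring.centerCongr e.toRingEquiv with commutes' r := Subtype.ext (e.commutes r) }

noncomputable def Subalgebra.centerProdEquiv (F A B : Type*) [Field F] [Ring A] [Ring B]
    [Algebra F A] [Algebra F B] [Nontrivial A] [Nontrivial B]
    [Algebra.IsCentral F A] [Algebra.IsCentral F B] :
    Subalgebra.center F (A × B) ≃ₐ[F] F × F :=
  let f := (Algebra.ofId F A).prodMap (Algebra.ofId F B)
  have hf : Function.Injective f :=
    Prod.map_injective.mpr ⟨(algebraMap F A).injective, (algebraMap F B).injective⟩
  have hrange : f.range = Subalgebra.center F (A × B) := by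
    rw [AlgHom.range_prodMap, Algebra.range_ofId, Algebra.range_ofId, Subalgebra.center_prod,
      Algebra.IsCentral.center_eq_bot, Algebra.IsCentral.center_eq_bot]
  ((AlgEquiv.ofInjective f hf).trans (Subalgebra.equivOfEq _ _ hrange)).symm

section EvenCongr

variable {R M₁ M₂ : Type*} [CommRing R] [AddCommGroup M₁] [AddCommGroup M₂] [Module R M₁]
  [Module R M₂] {Q₁ : QuadraticForm R M₁} {Q₂ : QuadraticForm R M₂}

theorem CliffordAlgebra.map_mem_even (f : Q₁ →qᵢ Q₂) {x : CliffordAlgebra Q₁}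
    (hx : x ∈ even Q₁) : map f x ∈ even Q₂ := by
  induction x, hx using even_induction with
  | algebraMap r => simpa only [AlgHom.commutes] using (even Q₂).algebraMap_mem r
  | add x y _ _ ihx ihy => simpa only [map_add] using add_mem ihx ihy
  | ι_mul_ι_mul m₁ m₂ x _ ih =>
    rw [map_mul, map_mul, map_apply_ι, map_apply_ι]
    exact mul_mem (ι_mul_ι_mem_evenOdd_zero Q₂ _ _) ih

def CliffordAlgebra.evenCongr (e : Q₁.IsometryEquiv Q₂) : even Q₁ ≃ₐ[R] even Q₂ where
  toFun x := ⟨equivOfIsometry e x, map_mem_even _ x.2⟩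
  invFun y := ⟨(equivOfIsometry e).symm y, map_mem_even _ y.2⟩
  left_inv x := Subtype.ext ((equivOfIsometry e).symm_apply_apply x)
  right_inv y := Subtype.ext ((equivOfIsometry e).apply_symm_apply y)
  map_mul' _ _ := Subtype.ext (map_mul _ _ _)
  map_add' _ _ := Subtype.ext (map_add _ _ _)
  commutes' r := Subtype.ext (AlgEquiv.commutes _ r)

end EvenCongr

section FiniteDimensional

variable {F M : Type*} [Field F] [NeZero (2 : F)] [AddCommGroup M] [Module F M]
  [FiniteDimensional F M]

instance CliffordAlgebra.finiteDimensional (Q : QuadraticForm F M) :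
    FiniteDimensional F (CliffordAlgebra Q) :=
  have := invertibleOfNonzero (two_ne_zero (α := F))
  have := Module.Finite.of_basis (finBasis F M).ExteriorAlgebra
  .equiv (equivExterior Q).symm

theorem CliffordAlgebra.finrank_eq_two_pow (Q : QuadraticForm F M) :
    finrank F (CliffordAlgebra Q) = 2 ^ finrank F M := by
  have := invertibleOfNonzero (two_ne_zero (α := F))
  rw [(equivExterior Q).finrank_eq, finrank_eq_card_basis (finBasis F M).ExteriorAlgebra,
    Fintype.card_finset, Fintype.card_fin]

end FiniteDimensional

section QuadraticExtension

variable {F K : Type*} [Field F] [Field K] [Algebra F K] {α : K} {δ : F}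

theorem linearIndependent_one_of_sq_eq_algebraMap (hα : α ^ 2 = algebraMap F K δ)
    (hδ : ¬IsSquare δ) : LinearIndependent F ![1, α] := by
  rw [LinearIndependent.pair_iff' one_ne_zero]
  rintro a rfl
  refine hδ ⟨a, (algebraMap F K).injective ?_⟩
  rw [← hα, Algebra.smul_def, mul_one, map_mul, sq]

theorem Algebra.norm_smul_one_add_smul (hK : finrank F K = 2) (hα : α ^ 2 = algebraMap F K δ)
    (hind : LinearIndependent F ![1, α]) (p q : F) :
    Algebra.norm F (p • 1 + q • α) = p ^ 2 - δ * q ^ 2 := by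
  let b := basisOfLinearIndependentOfCardEqFinrank hind (by simp [hK])
  have hb : ∀ i, b i = ![1, α] i := congrFun (coe_basisOfLinearIndependentOfCardEqFinrank _ _)
  have hrepr : ∀ s t : F, b.repr (s • 1 + t • α) = Finsupp.single 0 s + Finsupp.single 1 t := by
    intro s t
    rw [show (1 : K) = b 0 from (hb 0).symm, show α = b 1 from (hb 1).symm]
    simp [Finsupp.smul_single]
  have hmul : (p • 1 + q • α) * α = (δ * q) • 1 + p • α := by
    rw [add_mul, smul_mul_assoc, smul_mul_assoc, ← sq, hα, one_mul, Algebra.smul_def,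
      Algebra.smul_def, Algebra.smul_def, map_mul, mul_one]
    ring
  rw [Algebra.norm_eq_matrix_det b, Matrix.det_fin_two]
  simp only [Algebra.leftMulMatrix_apply, LinearMap.toMatrix_apply, Algebra.coe_lmul_eq_mul,
    LinearMap.mul_apply', hb]
  simp [hmul, hrepr, sq, mul_assoc]

end QuadraticExtension

theorem eq_zero_of_hyperbolic_eq_zero {F : Type*} [Field F] [NeZero (2 : F)] {n a b : F}
    (hn : n ≠ 0) (h₁ : (n + 1) * a + (n - 1) * b = 0) (h₂ : (n - 1) * a + (n + 1) * b = 0) :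
    a = 0 ∧ b = 0 := by
  have ha : (2 * 2 * n) * a = 0 := by linear_combination (n + 1) * h₁ - (n - 1) * h₂
  have hb : (2 * 2 * n) * b = 0 := by linear_combination (n + 1) * h₂ - (n - 1) * h₁
  simpa [hn, two_ne_zero] using And.intro ha hb

theorem Int.not_isSquare_cast_of_squarefree {d : ℤ} (hsf : Squarefree d) (hd : 1 < d) :
    ¬IsSquare (d : ℚ) := by
  rw [Rat.isSquare_intCast_iff]
  rintro ⟨r, rfl⟩
  rcases Int.isUnit_iff.mp (hsf r dvd_rfl) with rfl | rfl <;> simp at hd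

namespace SplitTernary

variable (F : Type*) [Field F]

local notation "M₂" => Matrix (Fin 2) (Fin 2) F

def form : QuadraticForm F (Fin 3 → F) :=
  QuadraticMap.weightedSumSquares F ![(1 : F), -1, 1]

theorem form_apply (v : Fin 3 → F) : form F v = v 0 * v 0 - v 1 * v 1 + v 2 * v 2 := by
  simp [form, QuadraticMap.weightedSumSquares_apply, Fin.sum_univ_three, sub_eq_add_neg]

def pauli : (Fin 3 → F) →ₗ[F] M₂ × M₂ where
  toFun v := (!![v 2, v 0 - v 1; v 0 + v 1, -v 2], !![-v 2, v 0 - v 1; v 0 + v 1, v 2])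
  map_add' v w := by ext i j <;> fin_cases i <;> fin_cases j <;> simp <;> ring
  map_smul' c v := by ext i j <;> fin_cases i <;> fin_cases j <;> simp <;> ring

theorem pauli_mul_self (v : Fin 3 → F) : pauli F v * pauli F v = algebraMap F _ (form F v) := by
  ext i j <;> fin_cases i <;> fin_cases j <;>
    simp [pauli, form_apply, Matrix.algebraMap_eq_diagonal] <;> ring

def toMatrixPair : CliffordAlgebra (form F) →ₐ[F] M₂ × M₂ :=
  lift (form F) ⟨pauli F, pauli_mul_self F⟩

variable {F}

theorem toMatrixPair_ι (v : Fin 3 → F) : toMatrixPair F (ι _ v) = pauli F v :=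
  lift_ι_apply _ _ _

theorem toMatrixPair_volume :
    toMatrixPair F (ι _ (Pi.single 0 1) * ι _ (Pi.single 1 1) * ι _ (Pi.single 2 1)) =
      (1, -1) := by
  simp only [map_mul, toMatrixPair_ι]
  ext i j <;> fin_cases i <;> fin_cases j <;> simp [pauli]

theorem toMatrixPair_algebraMap_add_ι (a : F) (v : Fin 3 → F) :
    toMatrixPair F (algebraMap F _ a + ι _ v) =
      (!![a + v 2, v 0 - v 1; v 0 + v 1, a - v 2], !![a - v 2, v 0 - v 1; v 0 + v 1, a + v 2]) := by
  rw [map_add, AlgHom.commutes, toMatrixPair_ι]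
  ext i j <;> fin_cases i <;> fin_cases j <;> simp [pauli, Matrix.algebraMap_eq_diagonal] <;> ring

variable [NeZero (2 : F)]

theorem fst_toMatrixPair_surjective : Function.Surjective fun x => (toMatrixPair F x).1 := by
  intro m
  refine ⟨algebraMap F _ ((m 0 0 + m 1 1) / 2) +
    ι _ ![(m 0 1 + m 1 0) / 2, (m 1 0 - m 0 1) / 2, (m 0 0 - m 1 1) / 2], ?_⟩
  simp only [toMatrixPair_algebraMap_add_ι]
  ext i j; fin_cases i <;> fin_cases j <;> simp <;> field_simp <;> ring

theorem snd_toMatrixPair_surjective : Function.Surjective fun x => (toMatrixPair F x).2 := by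
  intro m
  refine ⟨algebraMap F _ ((m 0 0 + m 1 1) / 2) +
    ι _ ![(m 0 1 + m 1 0) / 2, (m 1 0 - m 0 1) / 2, (m 1 1 - m 0 0) / 2], ?_⟩
  simp only [toMatrixPair_algebraMap_add_ι]
  ext i j; fin_cases i <;> fin_cases j <;> simp <;> field_simp <;> ring

theorem toMatrixPair_surjective : Function.Surjective (toMatrixPair F) := by
  have hidem : ((1, 0) : M₂ × M₂) ∈ (toMatrixPair F).range := by
    have h : ((1, 0) : M₂ × M₂) = (2⁻¹ : F) • (1 + (1, -1)) := by
      ext i j <;> fin_cases i <;> fin_cases j <;> simp <;> field_simp <;> norm_num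
    rw [h, ← toMatrixPair_volume]
    exact Subalgebra.smul_mem _ (add_mem (one_mem _) (AlgHom.mem_range_self _ _)) _
  rintro ⟨m, m'⟩
  obtain ⟨x, hx⟩ := fst_toMatrixPair_surjective m
  obtain ⟨y, hy⟩ := snd_toMatrixPair_surjective m'
  have h : ((m, m') : M₂ × M₂) =
      (1, 0) * toMatrixPair F x + (1 - (1, 0)) * toMatrixPair F y := by
    ext : 1 <;> simp [hx, hy]
  rw [← AlgHom.mem_range, h]
  exact add_mem (mul_mem hidem (AlgHom.mem_range_self _ x))
    (mul_mem (sub_mem (one_mem _) hidem) (AlgHom.mem_range_self _ y))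

theorem toMatrixPair_bijective : Function.Bijective (toMatrixPair F) := by
  have hdim : finrank F (CliffordAlgebra (form F)) = finrank F (M₂ × M₂) := by
    simp [CliffordAlgebra.finrank_eq_two_pow, finrank_prod, finrank_matrix]
  refine ⟨?_, toMatrixPair_surjective⟩
  exact (LinearMap.injective_iff_surjective_of_finrank_eq_finrank hdim
    (f := (toMatrixPair F).toLinearMap)).mpr toMatrixPair_surjective

variable (F) in
noncomputable def equivMatrixPair : CliffordAlgebra (form F) ≃ₐ[F] M₂ × M₂ :=
  AlgEquiv.ofBijective _ toMatrixPair_bijective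

variable {K : Type*} [Field K] [Algebra F K]

/-- With `zᵢ = pᵢ • 1 + qᵢ • α` this has `p₁ + p₂ = n (x + y)`, `p₁ - p₂ = x - y`,
`q₁ + q₂ = (n / δ) (z + w)` and `q₁ - q₂ = w - z`, so that
`N z₁ - N z₂ = n (x² - y² + z² - w²)` when `α² = δ`. -/
def toNormDiff (α : K) (δ n : F) : (Fin 3 → F) × F →ₗ[F] K × K where
  toFun u :=
    ((((n + 1) * u.1 0 + (n - 1) * u.1 1) / 2) • 1 +
        (((n / δ - 1) * u.1 2 + (n / δ + 1) * u.2) / 2) • α,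
      (((n - 1) * u.1 0 + (n + 1) * u.1 1) / 2) • 1 +
        (((n / δ + 1) * u.1 2 + (n / δ - 1) * u.2) / 2) • α)
  map_add' u v := by ext <;> simp <;> module
  map_smul' c u := by ext <;> simp <;> module

theorem normDiff_toNormDiff (hK : finrank F K = 2) {α : K} {δ : F}
    (hα : α ^ 2 = algebraMap F K δ) (hind : LinearIndependent F ![1, α]) (hδ : δ ≠ 0) {n : F}
    (hn : n ≠ 0) (u : (Fin 3 → F) × F) :
    Algebra.norm F (toNormDiff α δ n u).1 / n - Algebra.norm F (toNormDiff α δ n u).2 / n =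
      EquivEven.Q' (form F) u := by
  simp only [toNormDiff, LinearMap.coe_mk, AddHom.coe_mk,
    Algebra.norm_smul_one_add_smul hK hα hind, EquivEven.Q'_apply, form_apply]
  field_simp
  ring

theorem toNormDiff_injective {α : K} {δ : F} (hind : LinearIndependent F ![1, α]) (hδ : δ ≠ 0)
    {n : F} (hn : n ≠ 0) : Function.Injective (toNormDiff α δ n) := by
  rw [← LinearMap.ker_eq_bot, LinearMap.ker_eq_bot']
  rintro ⟨v, r⟩ h
  simp only [toNormDiff, LinearMap.coe_mk, AddHom.coe_mk, Prod.mk_eq_zero] at h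
  obtain ⟨hp₁, hq₁⟩ := LinearIndependent.pair_iff.mp hind _ _ h.1
  obtain ⟨hp₂, hq₂⟩ := LinearIndependent.pair_iff.mp hind _ _ h.2
  simp only [div_eq_zero_iff, two_ne_zero, or_false] at hp₁ hq₁ hp₂ hq₂
  obtain ⟨h0, h1⟩ := eq_zero_of_hyperbolic_eq_zero hn hp₁ hp₂
  obtain ⟨hr, h2⟩ := eq_zero_of_hyperbolic_eq_zero (a := r) (b := v 2) (div_ne_zero hn hδ)
    (by linear_combination hq₁) (by linear_combination hq₂)
  ext i
  · fin_cases i <;> simp [h0, h1, h2]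
  · simp [hr]

noncomputable def isometryEquivNormDiff (hK : finrank F K = 2) {α : K} {δ : F}
    (hα : α ^ 2 = algebraMap F K δ) (hind : LinearIndependent F ![1, α]) {n : F} (hn : n ≠ 0)
    (Q : QuadraticForm F (K × K))
    (hQ : ∀ z, Q z = Algebra.norm F z.1 / n - Algebra.norm F z.2 / n) :
    (EquivEven.Q' (form F)).IsometryEquiv Q :=
  have hδ : δ ≠ 0 := by
    rintro rfl
    exact hind.ne_zero 1 (by simpa using hα)
  have hinj := toNormDiff_injective hind hδ hn
  have : FiniteDimensional F K := finite_of_finrank_eq_succ hK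
  have hdim : finrank F ((Fin 3 → F) × F) = finrank F (K × K) := by simp [finrank_prod, hK]
  { LinearEquiv.ofBijective (toNormDiff α δ n)
      ⟨hinj, (LinearMap.injective_iff_surjective_of_finrank_eq_finrank hdim).mp hinj⟩ with
    map_app' u := by rw [hQ]; exact normDiff_toNormDiff hK hα hind hδ hn u }

end SplitTernary

/-- For `K` a real quadratic field and the quadratic form
`Q_A(z₁,z₂) = N(z₁)/N𝔞 - N(z₂)/N𝔞` on `V_A = K × K`, the center of the even
subalgebra `C⁰` of the Clifford algebra of `Q_A` is isomorphic as a ℚ-algebra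
to the split étale algebra `ℚ × ℚ`. -/
theorem statement8 (K : Type) [Field K] [NumberField K]
    (hdeg : Module.finrank ℚ K = 2)
    (d : ℤ) (hd : 1 < d) (hsf : Squarefree d)
    (α : K) (hα : α ^ 2 = (d : K))
    (𝔞 : Ideal (NumberField.RingOfIntegers K)) (h𝔞 : 𝔞 ≠ ⊥)
    (Q : QuadraticForm ℚ (K × K))
    (hQ : ∀ z : K × K,
      Q z = Algebra.norm ℚ z.1 / (Ideal.absNorm 𝔞 : ℚ)
          - Algebra.norm ℚ z.2 / (Ideal.absNorm 𝔞 : ℚ)) :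
    Nonempty ((Subalgebra.center ℚ ↥(CliffordAlgebra.even Q)) ≃ₐ[ℚ] (ℚ × ℚ)) := by
  have hn : (Ideal.absNorm 𝔞 : ℚ) ≠ 0 := Nat.cast_ne_zero.mpr (Ideal.absNorm_eq_zero_iff.not.mpr h𝔞)
  have hα' : α ^ 2 = algebraMap ℚ K d := by rw [hα, map_intCast]
  have hind := linearIndependent_one_of_sq_eq_algebraMap hα'
    (Int.not_isSquare_cast_of_squarefree hsf hd)
  let e := SplitTernary.isometryEquivNormDiff hdeg hα' hind hn Q hQ
  exact ⟨(evenCongr e).symm.centerCongr.trans <| (equivEven _).symm.centerCongr.trans <|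
    (SplitTernary.equivMatrixPair ℚ).centerCongr.trans (Subalgebra.centerProdEquiv ℚ _ _)⟩
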